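/- arXiv:1807.08678 — 3 statements merged into one kernel-verified Lean document; each statement's English description precedes it below -/
import Mathlib

section
/- If f is submodular, then for all distinct i, j ∈ E and x ∈ [0,1]^E, the second-order mixed partial derivative of the multilinear extension satisfies ∂²F/∂x_i∂x_j (x) ≤ 0. Concretely, with y = x with coordinates i,j zeroed, ∂²F/∂x_i∂x_j(x) = F(y ∨ {i,j}) − F(y ∨ {i}) − F(y ∨ {j}) + F(y) ≤ 0. -/
open Finset

/-- The multilinear extension of a set function. -/
noncomputable def mlext {E : Type*} [Fintype E] [DecidableEq E]
    (f : Finset E → ℝ) (x : E → ℝ) : ℝ :=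
  ∑ S : Finset E, f S * (∏ i ∈ S, x i) * ∏ i ∈ Sᶜ, (1 - x i)

lemma mlext_eval {E : Type*} [Fintype E] [DecidableEq E] (f : Finset E → ℝ)
    (s R : Finset E) (hR : R ⊆ s) (u x : E → ℝ)
    (h1 : ∀ k ∈ R, u k = 1) (h0 : ∀ k ∈ s, k ∉ R → u k = 0)
    (hagree : ∀ k, k ∉ s → u k = x k) :
    mlext f u = ∑ T ∈ sᶜ.powerset, f (T ∪ R) * ((∏ k ∈ T, x k) * ∏ k ∈ sᶜ \ T, (1 - x k)) := by
  unfold mlext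
  rw [← Finset.sum_filter_add_sum_filter_not Finset.univ (fun S => S ∩ s = R)]
  have h2 : ∑ S ∈ Finset.univ.filter (fun S => ¬ S ∩ s = R),
      f S * (∏ i ∈ S, u i) * ∏ i ∈ Sᶜ, (1 - u i) = 0 := by
    apply Finset.sum_eq_zero
    intro S hS
    simp only [Finset.mem_filter, Finset.mem_univ, true_and] at hS
    by_cases hRS : R ⊆ S ∩ s
    · obtain ⟨k, hk1, hk2⟩ := Finset.not_subset.mp (fun h => hS (Finset.Subset.antisymm h hRS))
      have hku : u k = 0 := h0 k (Finset.mem_inter.mp hk1).2 hk2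
      have : (∏ i ∈ S, u i) = 0 :=
        Finset.prod_eq_zero (Finset.mem_inter.mp hk1).1 hku
      rw [this]; ring
    · obtain ⟨k, hk1, hk2⟩ := Finset.not_subset.mp hRS
      have hkS : k ∉ S := fun h => hk2 (Finset.mem_inter.mpr ⟨h, hR hk1⟩)
      have : (∏ i ∈ Sᶜ, (1 - u i)) = 0 := by
        apply Finset.prod_eq_zero (Finset.mem_compl.mpr hkS)
        rw [h1 k hk1]; ring
      rw [this]; ring
  rw [h2, add_zero]
  have key : ∀ S ∈ Finset.univ.filter (fun S => S ∩ s = R), (S \ s) ∪ R = S := by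
    intro S hS
    simp only [Finset.mem_filter, Finset.mem_univ, true_and] at hS
    ext k
    simp only [Finset.mem_union, Finset.mem_sdiff]
    constructor
    · rintro (⟨hk1, _⟩ | hk1)
      · exact hk1
      · have : k ∈ S ∩ s := hS ▸ hk1
        exact (Finset.mem_inter.mp this).1
    · intro hk
      by_cases hks : k ∈ s
      · exact Or.inr (hS ▸ Finset.mem_inter.mpr ⟨hk, hks⟩)
      · exact Or.inl ⟨hk, hks⟩
  apply Finset.sum_nbij' (i := fun S => S \ s) (j := fun T => T ∪ R)
  · intro S hS
    simp only [Finset.mem_powerset]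
    intro k hk
    simp only [Finset.mem_sdiff] at hk
    exact Finset.mem_compl.mpr hk.2
  · intro T hT
    simp only [Finset.mem_powerset] at hT
    simp only [Finset.mem_filter, Finset.mem_univ, true_and]
    ext k
    simp only [Finset.mem_inter, Finset.mem_union]
    constructor
    · rintro ⟨hk1 | hk1, hk2⟩
      · exact absurd hk2 (Finset.mem_compl.mp (hT hk1))
      · exact hk1
    · exact fun hk => ⟨Or.inr hk, hR hk⟩
  · exact key
  · intro T hT
    simp only [Finset.mem_powerset] at hT
    ext k
    simp only [Finset.mem_sdiff, Finset.mem_union]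
    constructor
    · rintro ⟨hk1 | hk1, hk2⟩
      · exact hk1
      · exact absurd (hR hk1) hk2
    · intro hk
      exact ⟨Or.inl hk, Finset.mem_compl.mp (hT hk)⟩
  · intro S hS
    have hSeq := key S hS
    simp only [Finset.mem_filter, Finset.mem_univ, true_and] at hS
    rw [hSeq]
    have hd : Disjoint (S \ s) R := Finset.disjoint_of_subset_right hR Finset.sdiff_disjoint
    have hp1 : (∏ k ∈ S, u k) = ∏ k ∈ S \ s, x k :=
      calc (∏ k ∈ S, u k) = ∏ k ∈ (S \ s) ∪ R, u k := by rw [hSeq]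
        _ = (∏ k ∈ S \ s, u k) * ∏ k ∈ R, u k := Finset.prod_union hd
        _ = ∏ k ∈ S \ s, x k := by
            rw [Finset.prod_eq_one h1, mul_one]
            exact Finset.prod_congr rfl (fun k hk => hagree k (Finset.mem_sdiff.mp hk).2)
    have hc : Sᶜ = (sᶜ \ (S \ s)) ∪ (s \ R) := by
      ext k
      simp only [Finset.mem_compl, Finset.mem_sdiff, Finset.mem_union]
      constructor
      · intro hk
        by_cases hks : k ∈ s
        · refine Or.inr ⟨hks, fun hkR => hk ?_⟩
          have : k ∈ S ∩ s := hS.symm ▸ hkR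
          exact (Finset.mem_inter.mp this).1
        · exact Or.inl ⟨hks, fun h => hk h.1⟩
      · rintro (⟨hk1, hk2⟩ | ⟨hk1, hk2⟩) hkS
        · exact hk2 ⟨hkS, hk1⟩
        · exact hk2 (hS ▸ Finset.mem_inter.mpr ⟨hkS, hk1⟩)
    have hd2 : Disjoint (sᶜ \ (S \ s)) (s \ R) := by
      apply Finset.disjoint_of_subset_left (Finset.sdiff_subset)
      apply Finset.disjoint_of_subset_right (Finset.sdiff_subset)
      exact disjoint_compl_left
    have hp2 : (∏ k ∈ Sᶜ, (1 - u k)) = ∏ k ∈ sᶜ \ (S \ s), (1 - x k) := by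
      rw [hc, Finset.prod_union hd2]
      have : (∏ k ∈ s \ R, (1 - u k)) = 1 := by
        apply Finset.prod_eq_one
        intro k hk
        rw [h0 k (Finset.mem_sdiff.mp hk).1 (Finset.mem_sdiff.mp hk).2]; ring
      rw [this, mul_one]
      exact Finset.prod_congr rfl (fun k hk =>
        by rw [hagree k (Finset.mem_compl.mp (Finset.mem_sdiff.mp hk).1)])
    rw [hp1, hp2, mul_assoc]

/-- For submodular `f`, the mixed second partial derivative of the multilinear
extension is nonpositive. Here `y` is `x` with coordinates `i, j` zeroed, and
the mixed partial equals `F(y ∨ {i,j}) − F(y ∨ {i}) − F(y ∨ {j}) + F(y) ≤ 0`. -/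
theorem mlext_mixed_second_partial_nonpos {E : Type*} [Fintype E] [DecidableEq E]
    (f : Finset E → ℝ)
    (hsub : ∀ A B : Finset E, f A + f B ≥ f (A ∪ B) + f (A ∩ B))
    (i j : E) (hij : i ≠ j) (x : E → ℝ) (hx : ∀ k, 0 ≤ x k ∧ x k ≤ 1) :
    mlext f (Function.update (Function.update ((Function.update (Function.update x i 0) j 0)) i 1) j 1)
      - mlext f (Function.update (Function.update (Function.update x i 0) j 0) i 1)
      - mlext f (Function.update (Function.update (Function.update x i 0) j 0) j 1)
      + mlext f (Function.update (Function.update x i 0) j 0) ≤ 0 := by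
  classical
  set s : Finset E := {i, j} with hs
  have his : i ∈ s := by simp [hs]
  have hjs : j ∈ s := by simp [hs]
  have hmem : ∀ k, k ∈ s ↔ (k = i ∨ k = j) := by intro k; simp [hs]
  -- evaluate the four terms
  have e1 : mlext f (Function.update (Function.update ((Function.update (Function.update x i 0) j 0)) i 1) j 1)
      = ∑ T ∈ sᶜ.powerset, f (T ∪ ({i, j} : Finset E)) * ((∏ k ∈ T, x k) * ∏ k ∈ sᶜ \ T, (1 - x k)) := by
    apply mlext_eval f s ({i, j}) (by simp [hs]) _ x
    · intro k hk
      rcases Finset.mem_insert.mp hk with h | h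
      · subst h; simp [Function.update_apply, hij, hij.symm]
      · have : k = j := by simpa using h
        subst this; simp [Function.update_apply, hij, hij.symm]
    · intro k hk hk2
      exact absurd ((hmem k).mp hk) (by simpa using hk2)
    · intro k hk
      have h1 : k ≠ i := fun h => hk (h ▸ his)
      have h2 : k ≠ j := fun h => hk (h ▸ hjs)
      simp [Function.update_apply, h1, h2]
  have e2 : mlext f (Function.update (Function.update (Function.update x i 0) j 0) i 1)
      = ∑ T ∈ sᶜ.powerset, f (T ∪ ({i} : Finset E)) * ((∏ k ∈ T, x k) * ∏ k ∈ sᶜ \ T, (1 - x k)) := by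
    apply mlext_eval f s ({i}) (by simp [hs]) _ x
    · intro k hk
      have : k = i := by simpa using hk
      subst this; simp [Function.update_apply, hij, hij.symm]
    · intro k hk hk2
      have hkj : k = j := by
        rcases (hmem k).mp hk with h | h
        · exact absurd h (by simpa using hk2)
        · exact h
      subst hkj
      simp [Function.update_apply, hij, hij.symm]
    · intro k hk
      have h1 : k ≠ i := fun h => hk (h ▸ his)
      have h2 : k ≠ j := fun h => hk (h ▸ hjs)
      simp [Function.update_apply, h1, h2]
  have e3 : mlext f (Function.update (Function.update (Function.update x i 0) j 0) j 1)
      = ∑ T ∈ sᶜ.powerset, f (T ∪ ({j} : Finset E)) * ((∏ k ∈ T, x k) * ∏ k ∈ sᶜ \ T, (1 - x k)) := by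
    apply mlext_eval f s ({j}) (by simp [hs]) _ x
    · intro k hk
      have : k = j := by simpa using hk
      subst this; simp [Function.update_apply, hij, hij.symm]
    · intro k hk hk2
      have hki : k = i := by
        rcases (hmem k).mp hk with h | h
        · exact h
        · exact absurd h (by simpa using hk2)
      subst hki
      simp [Function.update_apply, hij, hij.symm]
    · intro k hk
      have h1 : k ≠ i := fun h => hk (h ▸ his)
      have h2 : k ≠ j := fun h => hk (h ▸ hjs)
      simp [Function.update_apply, h1, h2]
  have e4 : mlext f (Function.update (Function.update x i 0) j 0)
      = ∑ T ∈ sᶜ.powerset, f (T ∪ (∅ : Finset E)) * ((∏ k ∈ T, x k) * ∏ k ∈ sᶜ \ T, (1 - x k)) := by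
    apply mlext_eval f s (∅) (by simp) _ x
    · intro k hk; simp at hk
    · intro k hk _
      rcases (hmem k).mp hk with h | h
      · subst h; simp [Function.update_apply, hij, hij.symm]
      · subst h; simp [Function.update_apply, hij, hij.symm]
    · intro k hk
      have h1 : k ≠ i := fun h => hk (h ▸ his)
      have h2 : k ≠ j := fun h => hk (h ▸ hjs)
      simp [Function.update_apply, h1, h2]
  rw [e1, e2, e3, e4]
  rw [← Finset.sum_sub_distrib, ← Finset.sum_sub_distrib, ← Finset.sum_add_distrib]
  apply Finset.sum_nonpos
  intro T hT
  simp only [Finset.mem_powerset] at hT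
  have hiT : i ∉ T := fun h => (Finset.mem_compl.mp (hT h)) his
  have hjT : j ∉ T := fun h => (Finset.mem_compl.mp (hT h)) hjs
  have hw : 0 ≤ (∏ k ∈ T, x k) * ∏ k ∈ sᶜ \ T, (1 - x k) := by
    apply mul_nonneg
    · exact Finset.prod_nonneg (fun k _ => (hx k).1)
    · exact Finset.prod_nonneg (fun k _ => by linarith [(hx k).2])
  have hunion : (T ∪ {i}) ∪ (T ∪ {j}) = T ∪ ({i, j} : Finset E) := by
    ext k
    simp only [Finset.mem_union, Finset.mem_singleton, Finset.mem_insert]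
    tauto
  have hinter : (T ∪ {i}) ∩ (T ∪ {j}) = T := by
    ext k
    simp only [Finset.mem_inter, Finset.mem_union, Finset.mem_singleton]
    constructor
    · rintro ⟨hk1 | hk1, hk2 | hk2⟩
      · exact hk1
      · exact hk1
      · exact hk2
      · exact absurd (hk1 ▸ hk2 : i = j) hij
    · exact fun hk => ⟨Or.inl hk, Or.inl hk⟩
  have hkey := hsub (T ∪ {i}) (T ∪ {j})
  rw [hunion, hinter] at hkey
  have hbr : f (T ∪ ({i, j} : Finset E)) - f (T ∪ {i}) - f (T ∪ {j}) + f (T ∪ ∅) ≤ 0 := by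
    rw [Finset.union_empty]
    linarith
  calc f (T ∪ ({i, j} : Finset E)) * ((∏ k ∈ T, x k) * ∏ k ∈ sᶜ \ T, (1 - x k))
        - f (T ∪ {i}) * ((∏ k ∈ T, x k) * ∏ k ∈ sᶜ \ T, (1 - x k))
        - f (T ∪ {j}) * ((∏ k ∈ T, x k) * ∏ k ∈ sᶜ \ T, (1 - x k))
        + f (T ∪ ∅) * ((∏ k ∈ T, x k) * ∏ k ∈ sᶜ \ T, (1 - x k))
      = (f (T ∪ ({i, j} : Finset E)) - f (T ∪ {i}) - f (T ∪ {j}) + f (T ∪ ∅))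
        * ((∏ k ∈ T, x k) * ∏ k ∈ sᶜ \ T, (1 - x k)) := by ring
    _ ≤ 0 := mul_nonpos_of_nonpos_of_nonneg hbr hw
end

section
/- If f is a submodular set function with multilinear extension F, then for every x ∈ [0,1]^E and every nonnegative direction d ≥ 0, the function λ ↦ F(x + λ·d) is concave on the interval of λ for which x + λ·d ∈ [0,1]^E (monotone concavity). -/
open Finset

/-!
The multilinear extension `F` of `f` is affine in each coordinate, with slope
`F(y[i := 1]) - F(y[i := 0]) = F_{Δᵢ f}(y)`, where `Δᵢ f S = f (S ∪ {i}) - f (S \ {i})`.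
Hence along the line `l ↦ x + l • d` the derivative of `F_f` is `F_{∑ dᵢ Δᵢ f}`, and the second
derivative is `F_g` with `g = ∑_{i,k} dᵢ dₖ Δₖ Δᵢ f`. Every mixed second difference `Δₖ Δᵢ f` is
`≤ 0` by submodularity (it vanishes for `i = k`), so `g ≤ 0` when `d ≥ 0`, and `F_g ≤ 0` on the cube
because the weights of the multilinear extension are nonnegative there.
-/

open Function

lemma convex_setOf_line_mem_cube {E : Type*} (x d : E → ℝ) :
    Convex ℝ {l : ℝ | ∀ i, 0 ≤ x i + l * d i ∧ x i + l * d i ≤ 1} := by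
  simp only [Set.ofPred_forall]
  exact convex_iInter fun i => (convex_Icc (0 : ℝ) 1).affine_preimage
    (AffineMap.const ℝ ℝ (x i) + (LinearMap.smulRight LinearMap.id (d i)).toAffineMap)

section DecidableEq

variable {E : Type*} [DecidableEq E]

lemma submodular_second_diff_nonpos {f : Finset E → ℝ}
    (hsub : ∀ A B : Finset E, f A + f B ≥ f (A ∪ B) + f (A ∩ B)) (i k : E) (S : Finset E) :
    f (insert i (insert k S)) - f ((insert k S).erase i)
      - (f (insert i (S.erase k)) - f ((S.erase k).erase i)) ≤ 0 := by
  have hunion : insert i (S.erase k) ∪ (insert k S).erase i = insert i (insert k S) := by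
    ext m; simp only [mem_union, mem_insert, mem_erase]; tauto
  have hinter : insert i (S.erase k) ∩ (insert k S).erase i = (S.erase k).erase i := by
    ext m; simp only [mem_inter, mem_insert, mem_erase]; tauto
  have := hsub (insert i (S.erase k)) ((insert k S).erase i)
  rw [hunion, hinter] at this
  linarith

variable [Fintype E]

def cubeWeight (S : Finset E) (y : E → ℝ) : ℝ :=
  ∏ j, if j ∈ S then y j else 1 - y j

def cubeWeightAway (i : E) (S : Finset E) (y : E → ℝ) : ℝ :=
  ∏ j ∈ univ.erase i, if j ∈ S then y j else 1 - y j

lemma mlext_eq_sum_cubeWeight (f : Finset E → ℝ) (y : E → ℝ) :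
    mlext f y = ∑ S, f S * cubeWeight S y := by
  refine sum_congr rfl fun S _ => ?_
  rw [cubeWeight, prod_ite, mul_assoc]
  congr 3 <;> ext <;> simp

lemma cubeWeight_eq_mul_cubeWeightAway (i : E) (S : Finset E) (y : E → ℝ) :
    cubeWeight S y = (if i ∈ S then y i else 1 - y i) * cubeWeightAway i S y :=
  (mul_prod_erase univ _ (mem_univ i)).symm

lemma cubeWeightAway_update (i : E) (S : Finset E) (y : E → ℝ) (t : ℝ) :
    cubeWeightAway i S (update y i t) = cubeWeightAway i S y :=
  prod_congr rfl fun j hj => by rw [update_of_ne (ne_of_mem_erase hj)]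

lemma cubeWeightAway_insert (i : E) (S : Finset E) (y : E → ℝ) :
    cubeWeightAway i (insert i S) y = cubeWeightAway i S y :=
  prod_congr rfl fun j hj => by simp [ne_of_mem_erase hj]

lemma sum_finset_eq_sum_powerset_erase (i : E) (h : Finset E → ℝ) :
    ∑ S, h S = ∑ S ∈ (univ.erase i).powerset, (h S + h (insert i S)) := by
  rw [← powerset_univ, ← insert_erase (mem_univ i), sum_powerset_insert (notMem_erase i univ),
    sum_add_distrib, insert_erase (mem_univ i)]

lemma mlext_update (f : Finset E → ℝ) (y : E → ℝ) (i : E) (t : ℝ) :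
    mlext f (update y i t) = ∑ S ∈ (univ.erase i).powerset,
      ((1 - t) * f S + t * f (insert i S)) * cubeWeightAway i S y := by
  rw [mlext_eq_sum_cubeWeight, sum_finset_eq_sum_powerset_erase i]
  refine sum_congr rfl fun S hS => ?_
  have hi : i ∉ S := fun h => notMem_erase i univ (mem_powerset.mp hS h)
  simp only [cubeWeight_eq_mul_cubeWeightAway i, cubeWeightAway_update, cubeWeightAway_insert,
    update_self, if_neg hi, mem_insert_self, if_true]
  ring

lemma mlext_update_one_sub_mlext_update_zero (f : Finset E → ℝ) (y : E → ℝ) (i : E) :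
    mlext f (update y i 1) - mlext f (update y i 0) =
      mlext (fun S => f (insert i S) - f (S.erase i)) y := by
  conv_rhs => rw [← update_eq_self i y]
  simp only [mlext_update, ← sum_sub_distrib]
  refine sum_congr rfl fun S hS => ?_
  have hi : i ∉ S := fun h => notMem_erase i univ (mem_powerset.mp hS h)
  rw [insert_idem, erase_insert hi, erase_eq_of_notMem hi]
  ring

lemma mlext_sum_mul {ι : Type*} (s : Finset ι) (c : ι → ℝ) (g : ι → Finset E → ℝ)
    (y : E → ℝ) : mlext (fun S => ∑ i ∈ s, c i * g i S) y = ∑ i ∈ s, c i * mlext (g i) y := by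
  simp only [mlext, sum_mul, mul_sum]
  rw [sum_comm]
  simp only [mul_assoc]

lemma mlext_nonpos {g : Finset E → ℝ} (hg : ∀ S, g S ≤ 0) {y : E → ℝ}
    (hy : ∀ i, 0 ≤ y i ∧ y i ≤ 1) : mlext g y ≤ 0 :=
  sum_nonpos fun S _ => mul_nonpos_of_nonpos_of_nonneg
    (mul_nonpos_of_nonpos_of_nonneg (hg S) (prod_nonneg fun i _ => (hy i).1))
    (prod_nonneg fun i _ => sub_nonneg.mpr (hy i).2)

lemma hasDerivAt_cubeWeight_line (S : Finset E) (x d : E → ℝ) (l : ℝ) :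
    HasDerivAt (fun l => cubeWeight S fun i => x i + l * d i)
      (∑ i, d i * (cubeWeight S (update (fun i => x i + l * d i) i 1)
        - cubeWeight S (update (fun i => x i + l * d i) i 0))) l := by
  have hfactor : ∀ i, HasDerivAt (fun l => if i ∈ S then x i + l * d i else 1 - (x i + l * d i))
      (if i ∈ S then d i else -d i) l := by
    intro i
    have hline := (hasDerivAt_mul_const (d i)).const_add (x i) (x := l)
    split_ifs
    · exact hline
    · exact hline.const_sub 1
  refine (HasDerivAt.fun_finsetProd (u := univ) fun i _ => hfactor i).congr_deriv ?_
  refine sum_congr rfl fun i _ => ?_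
  simp only [cubeWeight_eq_mul_cubeWeightAway i, cubeWeightAway_update, update_self, smul_eq_mul]
  change cubeWeightAway i S (fun j => x j + l * d j) * _ = _
  split_ifs <;> ring

def discreteDeriv (d : E → ℝ) (f : Finset E → ℝ) (S : Finset E) : ℝ :=
  ∑ i, d i * (f (insert i S) - f (S.erase i))

lemma mlext_discreteDeriv (d : E → ℝ) (f : Finset E → ℝ) (y : E → ℝ) :
    mlext (discreteDeriv d f) y =
      ∑ i, d i * (mlext f (update y i 1) - mlext f (update y i 0)) := by
  rw [show discreteDeriv d f = fun S => ∑ i, d i * (f (insert i S) - f (S.erase i)) from rfl,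
    mlext_sum_mul]
  simp only [mlext_update_one_sub_mlext_update_zero]

lemma discreteDeriv_discreteDeriv_nonpos {f : Finset E → ℝ}
    (hsub : ∀ A B : Finset E, f A + f B ≥ f (A ∪ B) + f (A ∩ B)) {d : E → ℝ} (hd : ∀ i, 0 ≤ d i)
    (S : Finset E) : discreteDeriv d (discreteDeriv d f) S ≤ 0 := by
  refine sum_nonpos fun k _ => mul_nonpos_of_nonneg_of_nonpos (hd k) ?_
  rw [discreteDeriv, discreteDeriv, ← sum_sub_distrib]
  refine sum_nonpos fun i _ => ?_
  rw [← mul_sub]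
  exact mul_nonpos_of_nonneg_of_nonpos (hd i) (submodular_second_diff_nonpos hsub i k S)

lemma hasDerivAt_mlext_line (f : Finset E → ℝ) (x d : E → ℝ) (l : ℝ) :
    HasDerivAt (fun l => mlext f fun i => x i + l * d i)
      (mlext (discreteDeriv d f) fun i => x i + l * d i) l := by
  simp only [mlext_discreteDeriv, mlext_eq_sum_cubeWeight f]
  refine (HasDerivAt.fun_sum (u := univ) fun S _ =>
    (hasDerivAt_cubeWeight_line S x d l).const_mul (f S)).congr_deriv ?_
  simp only [mul_sum]
  rw [sum_comm]
  refine sum_congr rfl fun i _ => ?_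
  rw [← sum_sub_distrib, mul_sum]
  exact sum_congr rfl fun S _ => by ring

end DecidableEq

theorem mlext_concave_along_nonneg_direction_general {E : Type*} [Fintype E] [DecidableEq E]
    (f : Finset E → ℝ)
    (hsub : ∀ A B : Finset E, f A + f B ≥ f (A ∪ B) + f (A ∩ B))
    (x d : E → ℝ) (hd : ∀ i, 0 ≤ d i) :
    ConcaveOn ℝ {l : ℝ | ∀ i, 0 ≤ x i + l * d i ∧ x i + l * d i ≤ 1}
      (fun l => mlext f (fun i => x i + l * d i)) :=
  concaveOn_of_hasDerivWithinAt2_nonpos (convex_setOf_line_mem_cube x d)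
    (fun l _ => (hasDerivAt_mlext_line f x d l).continuousAt.continuousWithinAt)
    (fun l _ => (hasDerivAt_mlext_line f x d l).hasDerivWithinAt)
    (fun l _ => (hasDerivAt_mlext_line (discreteDeriv d f) x d l).hasDerivWithinAt)
    fun _ hl => mlext_nonpos (discreteDeriv_discreteDeriv_nonpos hsub hd) (interior_subset hl)

/-- Monotone concavity: for submodular `f`, the multilinear extension is concave
along any nonnegative direction `d`, on the interval of `λ` keeping `x + λ d` in the cube. -/
theorem mlext_concave_along_nonneg_direction {E : Type*} [Fintype E] [DecidableEq E]
    (f : Finset E → ℝ)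
    (hsub : ∀ A B : Finset E, f A + f B ≥ f (A ∪ B) + f (A ∩ B))
    (x d : E → ℝ) (hx : ∀ i, 0 ≤ x i ∧ x i ≤ 1) (hd : ∀ i, 0 ≤ d i) :
    ConcaveOn ℝ {l : ℝ | ∀ i, 0 ≤ x i + l * d i ∧ x i + l * d i ≤ 1}
      (fun l => mlext f (fun i => x i + l * d i)) :=
  mlext_concave_along_nonneg_direction_general f hsub x d hd
end

section
/- Let f be a normalized monotone submodular function with multilinear extension F, S a finite set of elements, Q a set, δ ∈ [0,1], and let R ~ δ·S denote a random subset of S including each element independently with probability δ. Then E[f(Q ∪ R)] − f(Q) = F(𝟙_Q ∨ δ𝟙_{S∖Q}) − F(𝟙_Q), where ∨ denotes the coordinatewise maximum. -/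
open Finset

lemma sumB {E : Type*} [DecidableEq E] (Q : Finset E) (δ : ℝ) (S : Finset E) :
    ∀ g : Finset E → ℝ,
    ∑ R ∈ S.powerset, δ ^ R.card * (1 - δ) ^ (S.card - R.card) * g (Q ∪ R)
      = ∑ R ∈ (S \ Q).powerset,
          δ ^ R.card * (1 - δ) ^ ((S \ Q).card - R.card) * g (Q ∪ R) := by
  induction S using Finset.induction_on with
  | empty => simp
  | @insert a S ha ih =>
    intro g
    by_cases haQ : a ∈ Q
    · rw [Finset.insert_sdiff_of_mem _ haQ, Finset.sum_powerset_insert ha, ← ih g]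
      rw [← Finset.sum_add_distrib]
      apply Finset.sum_congr rfl
      intro R hR
      rw [Finset.mem_powerset] at hR
      have haR : a ∉ R := fun h => ha (hR h)
      have hQR : Q ∪ insert a R = Q ∪ R := by
        rw [Finset.union_insert, Finset.insert_eq_self.2 (Finset.mem_union_left _ haQ)]
      have hc : R.card ≤ S.card := Finset.card_le_card hR
      rw [hQR, Finset.card_insert_of_notMem haR, Finset.card_insert_of_notMem ha]
      rw [show S.card + 1 - R.card = (S.card - R.card) + 1 by omega,
        show S.card + 1 - (R.card + 1) = S.card - R.card by omega]
      ring
    · have haSQ : a ∉ S \ Q := fun h => ha (Finset.mem_sdiff.1 h).1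
      rw [Finset.insert_sdiff_of_notMem _ haQ, Finset.sum_powerset_insert ha,
        Finset.sum_powerset_insert haSQ]
      have e1 : ∑ R ∈ S.powerset,
          δ ^ R.card * (1 - δ) ^ ((insert a S).card - R.card) * g (Q ∪ R)
          = ∑ R ∈ (S \ Q).powerset,
          δ ^ R.card * (1 - δ) ^ ((insert a (S \ Q)).card - R.card) * g (Q ∪ R) := by
        rw [Finset.card_insert_of_notMem ha, Finset.card_insert_of_notMem haSQ]
        have l : ∀ (T : Finset E),
            ∑ R ∈ T.powerset, δ ^ R.card * (1 - δ) ^ (T.card + 1 - R.card) * g (Q ∪ R)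
            = (1 - δ) * ∑ R ∈ T.powerset, δ ^ R.card * (1 - δ) ^ (T.card - R.card) * g (Q ∪ R) := by
          intro T
          rw [Finset.mul_sum]
          apply Finset.sum_congr rfl
          intro R hR
          rw [Finset.mem_powerset] at hR
          have hc : R.card ≤ T.card := Finset.card_le_card hR
          rw [show T.card + 1 - R.card = (T.card - R.card) + 1 by omega]
          ring
        rw [l S, l (S \ Q), ih g]
      have e2 : ∑ R ∈ S.powerset,
          δ ^ (insert a R).card * (1 - δ) ^ ((insert a S).card - (insert a R).card)
            * g (Q ∪ insert a R)
          = ∑ R ∈ (S \ Q).powerset,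
          δ ^ (insert a R).card * (1 - δ) ^ ((insert a (S \ Q)).card - (insert a R).card)
            * g (Q ∪ insert a R) := by
        have l : ∀ (T : Finset E), a ∉ T →
            ∑ R ∈ T.powerset, δ ^ (insert a R).card
              * (1 - δ) ^ ((insert a T).card - (insert a R).card) * g (Q ∪ insert a R)
            = δ * ∑ R ∈ T.powerset, δ ^ R.card * (1 - δ) ^ (T.card - R.card)
              * g (insert a (Q ∪ R)) := by
          intro T haT
          rw [Finset.mul_sum]
          apply Finset.sum_congr rfl
          intro R hR
          rw [Finset.mem_powerset] at hR
          have haR : a ∉ R := fun h => haT (hR h)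
          rw [Finset.card_insert_of_notMem haR, Finset.card_insert_of_notMem haT,
            Finset.union_insert, show T.card + 1 - (R.card + 1) = T.card - R.card by omega]
          ring
        rw [l S ha, l (S \ Q) haSQ, ih (fun T => g (insert a T))]
      rw [e1, e2]

lemma mlext_eval_s18 {E : Type*} [Fintype E] [DecidableEq E]
    (f : Finset E → ℝ) (Q S : Finset E) (δ : ℝ) :
    mlext f (fun i => if i ∈ Q then 1 else if i ∈ S then δ else 0)
      = ∑ R ∈ (S \ Q).powerset,
          δ ^ R.card * (1 - δ) ^ ((S \ Q).card - R.card) * f (Q ∪ R) := by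
  classical
  unfold mlext
  rw [← Finset.sum_filter_of_ne (s := Finset.univ)
    (p := fun T : Finset E => Q ⊆ T ∧ T ⊆ Q ∪ S) ?hzero]
  case hzero =>
    intro T _ hne
    by_contra hp
    apply hne
    rw [not_and_or] at hp
    rcases hp with hp | hp
    · obtain ⟨i, hiQ, hiT⟩ := Finset.not_subset.1 hp
      have : (∏ i ∈ Tᶜ, (1 - if i ∈ Q then (1:ℝ) else if i ∈ S then δ else 0)) = 0 :=
        Finset.prod_eq_zero (Finset.mem_compl.2 hiT) (by simp [hiQ])
      rw [this, mul_zero]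
    · obtain ⟨i, hiT, hiQS⟩ := Finset.not_subset.1 hp
      rw [Finset.mem_union, not_or] at hiQS
      have : (∏ i ∈ T, (if i ∈ Q then (1:ℝ) else if i ∈ S then δ else 0)) = 0 :=
        Finset.prod_eq_zero hiT (by simp [hiQS.1, hiQS.2])
      rw [this, mul_zero, zero_mul]
  apply Finset.sum_bij' (i := fun T _ => T \ Q) (j := fun R _ => Q ∪ R)
  · intro T hT
    rw [Finset.mem_filter] at hT
    rw [Finset.mem_powerset]
    exact fun i hi => by
      rw [Finset.mem_sdiff] at hi ⊢
      exact ⟨(Finset.mem_union.1 (hT.2.2 hi.1)).resolve_left hi.2, hi.2⟩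
  · intro R hR
    rw [Finset.mem_powerset] at hR
    rw [Finset.mem_filter]
    refine ⟨Finset.mem_univ _, Finset.subset_union_left, ?_⟩
    exact Finset.union_subset_union_right fun i hi => (Finset.mem_sdiff.1 (hR hi)).1
  · intro T hT
    rw [Finset.mem_filter] at hT
    exact Finset.union_sdiff_of_subset hT.2.1
  · intro R hR
    rw [Finset.mem_powerset] at hR
    rw [Finset.union_sdiff_left]
    exact Finset.sdiff_eq_self_of_disjoint (Finset.disjoint_left.2
      fun i hi h => (Finset.mem_sdiff.1 (hR hi)).2 h)
  · intro T hT
    rw [Finset.mem_filter] at hT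
    obtain ⟨-, hQT, hTQS⟩ := hT
    have hTQ : T \ Q ⊆ S \ Q := fun i hi => by
      rw [Finset.mem_sdiff] at hi ⊢
      exact ⟨(Finset.mem_union.1 (hTQS hi.1)).resolve_left hi.2, hi.2⟩
    have hp1 : (∏ i ∈ T, (if i ∈ Q then (1:ℝ) else if i ∈ S then δ else 0))
        = δ ^ (T \ Q).card := by
      rw [Finset.prod_congr rfl (g := fun i => if i ∈ Q then (1:ℝ) else δ) ?_,
        Finset.prod_ite, Finset.prod_const_one, Finset.prod_const, one_mul,
        ← Finset.sdiff_eq_filter]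
      intro i hi
      by_cases hiQ : i ∈ Q
      · simp [hiQ]
      · have : i ∈ S := (Finset.mem_union.1 (hTQS hi)).resolve_left hiQ
        simp [hiQ, this]
    have hp2 : (∏ i ∈ Tᶜ, (1 - if i ∈ Q then (1:ℝ) else if i ∈ S then δ else 0))
        = (1 - δ) ^ (S \ T).card := by
      rw [Finset.prod_congr rfl (g := fun i => if i ∈ S then (1 - δ) else 1) ?_,
        Finset.prod_ite, Finset.prod_const_one, Finset.prod_const, mul_one]
      · have : Tᶜ.filter (· ∈ S) = S \ T := by
          ext i
          simp only [Finset.mem_filter, Finset.mem_compl, Finset.mem_sdiff]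
          tauto
        rw [this]
      · intro i hi
        rw [Finset.mem_compl] at hi
        have hiQ : i ∉ Q := fun h => hi (hQT h)
        by_cases hiS : i ∈ S <;> simp [hiQ, hiS]
    have hST : S \ T = (S \ Q) \ (T \ Q) := by
      ext i
      simp only [Finset.mem_sdiff]
      constructor
      · intro ⟨hiS, hiT⟩
        exact ⟨⟨hiS, fun h => hiT (hQT h)⟩, fun h => hiT h.1⟩
      · intro ⟨⟨hiS, hiQ⟩, h⟩
        exact ⟨hiS, fun hiT => h ⟨hiT, hiQ⟩⟩
    rw [hp1, hp2, hST, Finset.card_sdiff_of_subset hTQ, Finset.union_sdiff_of_subset hQT]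
    ring

/-- The expected marginal gain of including each element of `S` independently
with probability `δ` into `Q` equals the multilinear-extension marginal
`F(𝟙_Q ∨ δ𝟙_{S∖Q}) − F(𝟙_Q)`. The expectation over the random subset
`R ~ δ·S` is written out as a sum over subsets of `S`. -/
theorem expected_marginal_eq_mlext_marginal {E : Type*} [Fintype E] [DecidableEq E]
    (f : Finset E → ℝ)
    (hnorm : f ∅ = 0)
    (hmono : ∀ S T : Finset E, S ⊆ T → f S ≤ f T)
    (hsub : ∀ A B : Finset E, f A + f B ≥ f (A ∪ B) + f (A ∩ B))
    (Q S : Finset E) (δ : ℝ) (hδ0 : 0 ≤ δ) (hδ1 : δ ≤ 1) :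
    (∑ R ∈ S.powerset, δ ^ R.card * (1 - δ) ^ (S.card - R.card) * f (Q ∪ R))
        - f Q =
      mlext f (fun i => if i ∈ Q then 1 else if i ∈ S then δ else 0)
        - mlext f (fun i => if i ∈ Q then 1 else 0) := by
  have h2 : (fun i => if i ∈ Q then (1:ℝ) else 0)
      = (fun i => if i ∈ Q then 1 else if i ∈ (∅ : Finset E) then δ else 0) := by
    funext i
    simp
  rw [h2, mlext_eval_s18, mlext_eval_s18, sumB Q δ S f]
  simp
end
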